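/- Let n ≥ 1 be an integer and m > 1 real. Let A, ω, R > 0 and R/2 < B₀ < R satisfy ω/A > 1 + 2(m−1)(n−1)(R−B₀)/R, and define H(x,t) = A · max(|x| + ωt − B₀, 0). Then H is a classical free-boundary supersolution of (PME) (that is, of (PME–D) with Φ ≡ 0) in the domain {|x| ≤ R} × [−(R−B₀)/ω, 0]; in particular, at every point (x,t) of this domain with H(x,t) > 0 one has ∂_t H ≥ (m−1) H ΔH + |∇H|², and on the free boundary {|x| = B₀ − ωt} one has |∇H| = A > 0 and ∂_t H = Aω ≥ A² = |∇H|². -/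

import Mathlib

/-!
On its positivity set `{|x| + ωt > B₀}` the wave is `H = A(|x| + ωt − B₀)`, smooth away from the
origin, with `∂ₜH = Aω`, `∇H = A x/|x|` (so `|∇H| = A`) and `ΔH = A(n − 1)/|x|`. On the domain
`t ≤ 0`, hence `H ≤ A(R − B₀)` and `|x| ≥ B₀ > R/2` wherever `H > 0`, so
`(m − 1) H ΔH + |∇H|² ≤ A²(1 + 2(m − 1)(n − 1)(R − B₀)/R) < Aω` by the speed condition.
The free boundary is the sphere `|x| = B₀ − ωt`, where `∇H` and `∂ₜH` extend continuously from the
positivity set with limits of norm `A` and value `Aω ≥ A²`.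
-/

open Set Metric Filter Topology MeasureTheory
open scoped RealInnerProductSpace

noncomputable section

abbrev Euc (n : ℕ) := EuclideanSpace ℝ (Fin n)

variable {n : ℕ}

/-- Spatial Laplacian: sum of pure second partial derivatives. -/
def lap (f : Euc n → ℝ) (x : Euc n) : ℝ :=
  ∑ i : Fin n,
    fderiv ℝ (fun y => fderiv ℝ f y (EuclideanSpace.single i 1)) x (EuclideanSpace.single i 1)

/-- Time derivative of `u(x, ·)`. -/
def dt (u : Euc n → ℝ → ℝ) (x : Euc n) (t : ℝ) : ℝ := deriv (fun s => u x s) t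

/-- Spatial gradient of `u(·, t)`. -/
def gradx (u : Euc n → ℝ → ℝ) (x : Euc n) (t : ℝ) : Euc n := gradient (fun y => u y t) x

/-- Spatial Laplacian of `u(·, t)`. -/
def lapx (u : Euc n → ℝ → ℝ) (x : Euc n) (t : ℝ) : ℝ := lap (fun y => u y t) x

/-- Right-hand side of the pressure equation (PME–D):
`(m−1) u Δu + |∇u|² + ∇u·∇Φ + (m−1) u ΔΦ`. -/
def pmeDrhs (m : ℝ) (Φ : Euc n → ℝ) (u : Euc n → ℝ → ℝ) (x : Euc n) (t : ℝ) : ℝ :=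
  (m - 1) * u x t * lapx u x t + ‖gradx u x t‖ ^ 2
    + ⟪gradx u x t, gradient Φ x⟫ + (m - 1) * u x t * lap Φ x

/-- RHS used in the viscosity inequalities: `(m−1)φΔφ + |∇φ|² + ∇·(φ∇Φ)`. -/
def pmeDviscRhs (m : ℝ) (Φ : Euc n → ℝ) (u : Euc n → ℝ → ℝ) (x : Euc n) (t : ℝ) : ℝ :=
  (m - 1) * u x t * lapx u x t + ‖gradx u x t‖ ^ 2
    + ⟪gradx u x t, gradient Φ x⟫ + u x t * lap Φ x

/-- A bounded open set with smooth boundary. -/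
def IsSmoothDomain (U : Set (Euc n)) : Prop :=
  IsOpen U ∧ Bornology.IsBounded U ∧
    ∀ x ∈ frontier U, ∃ (V : Set (Euc n)) (f : Euc n → ℝ),
      IsOpen V ∧ x ∈ V ∧ ContDiff ℝ (⊤ : ℕ∞) f ∧ (∀ y ∈ V, (y ∈ U ↔ f y < 0)) ∧
        ∀ y ∈ V, fderiv ℝ f y ≠ 0

/-- A cylinder-like space–time domain `⋃_{t₁ ≤ t ≤ t₂} Σ(t) × {t}`. -/
structure CylDomain (n : ℕ) where
  t1 : ℝ
  t2 : ℝ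
  t1_le_t2 : t1 ≤ t2
  sec : ℝ → Set (Euc n)
  smooth_sec : ∀ t ∈ Icc t1 t2, IsSmoothDomain (sec t)

def CylDomain.carrier (S : CylDomain n) : Set (Euc n × ℝ) :=
  {p | p.2 ∈ Icc S.t1 S.t2 ∧ p.1 ∈ S.sec p.2}

def CylDomain.parabolicBoundary (S : CylDomain n) : Set (Euc n × ℝ) :=
  (closure (S.sec S.t1) ×ˢ ({S.t1} : Set ℝ)) ∪
    {p | p.2 ∈ Icc S.t1 S.t2 ∧ p.1 ∈ frontier (S.sec p.2)}

/-- `C^{2,1}` regularity (two continuous derivatives in space, one in time) on a set. -/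
def C21On (φ : Euc n → ℝ → ℝ) (S : Set (Euc n × ℝ)) : Prop :=
  ContinuousOn (fun p : Euc n × ℝ => φ p.1 p.2) S ∧
  ∀ p ∈ S,
    ContDiffAt ℝ 2 (fun x => φ x p.2) p.1 ∧
    DifferentiableAt ℝ (fun s => φ p.1 s) p.2 ∧
    ContinuousWithinAt (fun q : Euc n × ℝ => dt φ q.1 q.2) S p ∧
    ContinuousWithinAt (fun q : Euc n × ℝ => gradx φ q.1 q.2) S p ∧
    ContinuousWithinAt (fun q : Euc n × ℝ => lapx φ q.1 q.2) S p

/-- Space–time positivity set of `u`. -/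
def PosSet (u : Euc n → ℝ → ℝ) : Set (Euc n × ℝ) := {q : Euc n × ℝ | 0 < u q.1 q.2}

/-- Classical free-boundary subsolution of (PME–D) in `S`. -/
structure ClassicalFBSub (m : ℝ) (Φ : Euc n → ℝ) (u : Euc n → ℝ → ℝ)
    (S : Set (Euc n × ℝ)) : Prop where
  nonneg : ∀ p ∈ S, 0 ≤ u p.1 p.2
  cont : ContinuousOn (fun p : Euc n × ℝ => u p.1 p.2) S
  reg : C21On u (S ∩ PosSet u)
  pde : ∀ p ∈ S ∩ PosSet u, dt u p.1 p.2 ≤ pmeDrhs m Φ u p.1 p.2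
  bdry : ∀ p ∈ S ∩ frontier (PosSet u), ∃ (G : Euc n) (T : ℝ),
    Tendsto (fun q : Euc n × ℝ => gradx u q.1 q.2) (𝓝[PosSet u] p) (𝓝 G) ∧
    Tendsto (fun q : Euc n × ℝ => dt u q.1 q.2) (𝓝[PosSet u] p) (𝓝 T) ∧
    0 < ‖G‖ ∧ T ≤ ‖G‖ ^ 2 + ⟪gradient Φ p.1, G⟫

/-- Classical free-boundary supersolution of (PME–D) in `S`. -/
structure ClassicalFBSuper (m : ℝ) (Φ : Euc n → ℝ) (u : Euc n → ℝ → ℝ)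
    (S : Set (Euc n × ℝ)) : Prop where
  nonneg : ∀ p ∈ S, 0 ≤ u p.1 p.2
  cont : ContinuousOn (fun p : Euc n × ℝ => u p.1 p.2) S
  reg : C21On u (S ∩ PosSet u)
  pde : ∀ p ∈ S ∩ PosSet u, pmeDrhs m Φ u p.1 p.2 ≤ dt u p.1 p.2
  bdry : ∀ p ∈ S ∩ frontier (PosSet u), ∃ (G : Euc n) (T : ℝ),
    Tendsto (fun q : Euc n × ℝ => gradx u q.1 q.2) (𝓝[PosSet u] p) (𝓝 G) ∧
    Tendsto (fun q : Euc n × ℝ => dt u q.1 q.2) (𝓝[PosSet u] p) (𝓝 T) ∧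
    0 < ‖G‖ ∧ ‖G‖ ^ 2 + ⟪gradient Φ p.1, G⟫ ≤ T

/-- `φ` touches `u` from above at `p₀` in `S`. -/
def TouchesAbove (φ u : Euc n → ℝ → ℝ) (S : Set (Euc n × ℝ)) (p₀ : Euc n × ℝ) : Prop :=
  p₀ ∈ S ∧ φ p₀.1 p₀.2 = u p₀.1 p₀.2 ∧
    ∀ᶠ q in 𝓝[S ∩ {q : Euc n × ℝ | q.2 ≤ p₀.2}] p₀, u q.1 q.2 ≤ φ q.1 q.2

/-- `φ` touches `u` from below at `p₀` in `S`. -/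
def TouchesBelow (φ u : Euc n → ℝ → ℝ) (S : Set (Euc n × ℝ)) (p₀ : Euc n × ℝ) : Prop :=
  p₀ ∈ S ∧ φ p₀.1 p₀.2 = u p₀.1 p₀.2 ∧
    ∀ᶠ q in 𝓝[S ∩ {q : Euc n × ℝ | q.2 ≤ p₀.2}] p₀, φ q.1 q.2 ≤ u q.1 q.2

/-- Strictly separated data `u₀ ≺ v₀`. -/
def Prec (u₀ v₀ : Euc n → ℝ) : Prop :=
  IsCompact (closure {x | u₀ x ≠ 0}) ∧
  closure {x | u₀ x ≠ 0} ⊆ interior (closure {x | v₀ x ≠ 0}) ∧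
  ∀ x ∈ closure {x | u₀ x ≠ 0}, u₀ x < v₀ x

/-- `f ≺ g` on a space–time set `S`. -/
def PrecOn (f g : Euc n → ℝ → ℝ) (S : Set (Euc n × ℝ)) : Prop :=
  closure {p ∈ S | 0 < f p.1 p.2} ⊆ PosSet g ∧
  ∀ p ∈ S, 0 < f p.1 p.2 → f p.1 p.2 < g p.1 p.2

/-- Viscosity subsolution of (PME–D) in `D`. -/
def ViscSub (m : ℝ) (Φ : Euc n → ℝ) (u : Euc n → ℝ → ℝ) (D : Set (Euc n × ℝ)) : Prop :=
  ContinuousOn (fun p : Euc n × ℝ => u p.1 p.2) D ∧ (∀ p ∈ D, 0 ≤ u p.1 p.2) ∧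
  ∀ Sg : CylDomain n, Sg.carrier ⊆ D →
    ∀ φ : Euc n → ℝ → ℝ, C21On φ Sg.carrier →
      ∀ p₀ : Euc n × ℝ, TouchesAbove φ u Sg.carrier p₀ →
        dt φ p₀.1 p₀.2 ≤ pmeDviscRhs m Φ φ p₀.1 p₀.2

/-- Viscosity supersolution of (PME–D) in `D`. -/
def ViscSuper (m : ℝ) (Φ : Euc n → ℝ) (u : Euc n → ℝ → ℝ) (D : Set (Euc n × ℝ)) : Prop :=
  ContinuousOn (fun p : Euc n × ℝ => u p.1 p.2) D ∧ (∀ p ∈ D, 0 ≤ u p.1 p.2) ∧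
  (∀ Sg : CylDomain n, Sg.carrier ⊆ D →
    ∀ φ : Euc n → ℝ → ℝ, C21On φ Sg.carrier →
      ∀ p₀ : Euc n × ℝ, TouchesBelow φ u Sg.carrier p₀ → 0 < u p₀.1 p₀.2 →
        pmeDviscRhs m Φ φ p₀.1 p₀.2 ≤ dt φ p₀.1 p₀.2) ∧
  (∀ Sg : CylDomain n, Sg.carrier ⊆ D →
    ∀ φ : Euc n → ℝ → ℝ, ClassicalFBSub m Φ φ Sg.carrier →
      PrecOn φ u Sg.parabolicBoundary →
        ∀ p ∈ Sg.carrier, φ p.1 p.2 ≤ u p.1 p.2)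

/-- Viscosity solution of (PME–D) in `D` with initial data `u₀`
(attained uniformly as `t → 0⁺`). -/
def ViscSolution (m : ℝ) (Φ : Euc n → ℝ) (u₀ : Euc n → ℝ) (u : Euc n → ℝ → ℝ)
    (D : Set (Euc n × ℝ)) : Prop :=
  ViscSub m Φ u D ∧ ViscSuper m Φ u D ∧
    TendstoUniformly (fun t (x : Euc n) => u x t) u₀ (𝓝[>] (0 : ℝ))

section Radial

variable {F : Type*} [NormedAddCommGroup F] [InnerProductSpace ℝ F]

theorem hasFDerivAt_norm {x : F} (hx : x ≠ 0) :
    HasFDerivAt (‖·‖) (‖x‖⁻¹ • innerSL ℝ x) x := by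
  have hsq : ‖x‖ ^ 2 ≠ 0 := pow_ne_zero 2 (norm_ne_zero_iff.2 hx)
  have h := (Real.hasDerivAt_sqrt hsq).comp_hasFDerivAt x (hasStrictFDerivAt_norm_sq x).hasFDerivAt
  simp only [Function.comp_def, Real.sqrt_sq (norm_nonneg _)] at h
  refine h.congr_fderiv ?_
  ext v
  simp only [smul_apply, innerSL_apply_apply, nsmul_eq_mul, smul_eq_mul]
  ring

theorem hasGradientAt_const_mul_norm_add [CompleteSpace F] (a b : ℝ) {x : F} (hx : x ≠ 0) :
    HasGradientAt (fun y => a * ‖y‖ + b) ((a / ‖x‖) • x) x := by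
  rw [hasGradientAt_iff_hasFDerivAt]
  refine (((hasFDerivAt_norm hx).const_mul a).add_const b).congr_fderiv ?_
  ext v
  simp only [smul_apply, innerSL_apply_apply, smul_eq_mul,
    InnerProductSpace.toDual_apply_apply, real_inner_smul_left]
  ring

theorem norm_div_norm_smul {a : ℝ} (ha : 0 ≤ a) {x : F} (hx : x ≠ 0) : ‖(a / ‖x‖) • x‖ = a := by
  rw [norm_smul, Real.norm_of_nonneg (by positivity), div_mul_cancel₀ _ (norm_ne_zero_iff.2 hx)]

end Radial

theorem lap_congr {f g : Euc n → ℝ} {x : Euc n} (h : f =ᶠ[𝓝 x] g) : lap f x = lap g x := by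
  unfold lap
  congr! 2 with i
  exact (h.fderiv.fun_comp fun L => L _).fderiv_eq

theorem lap_const_mul_add_const (a b : ℝ) (f : Euc n → ℝ) (x : Euc n) :
    lap (fun y => a * f y + b) x = a * lap f x := by
  have hf : fderiv ℝ (fun y => a * f y + b) = a • fderiv ℝ f := by
    ext1 y
    rw [fderiv_add_const]
    exact congrFun (fderiv_const_smul_field (f := f) a) y
  have hdir (e : Euc n) :
      (fun y => fderiv ℝ (fun y => a * f y + b) y e) = a • fun y => fderiv ℝ f y e := by
    ext y; rw [hf]; rfl
  simp only [lap, hdir, fderiv_const_smul_field, Finset.mul_sum]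
  rfl

theorem lap_norm {x : Euc n} (hx : x ≠ 0) : lap (‖·‖) x = (n - 1) / ‖x‖ := by
  have hinv : HasFDerivAt (fun y : Euc n => ‖y‖⁻¹) (-(‖x‖ ^ 2)⁻¹ • ‖x‖⁻¹ • innerSL ℝ x) x :=
    (hasDerivAt_inv (norm_ne_zero_iff.2 hx)).comp_hasFDerivAt x (hasFDerivAt_norm hx)
  have hsecond (i : Fin n) :
      fderiv ℝ (fun y => fderiv ℝ (‖·‖) y (EuclideanSpace.single i 1)) x
        (EuclideanSpace.single i 1) = ‖x‖⁻¹ - x i ^ 2 / ‖x‖ ^ 3 := by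
    set e : Euc n := EuclideanSpace.single i 1
    have hdir : (fun y => fderiv ℝ (‖·‖) y e) =ᶠ[𝓝 x] fun y => ‖y‖⁻¹ * ⟪e, y⟫ := by
      filter_upwards [isOpen_ne.mem_nhds hx] with y hy
      simp [(hasFDerivAt_norm hy).fderiv, real_inner_comm]
    have hprod : HasFDerivAt (fun y => ‖y‖⁻¹ * ⟪e, y⟫) _ x := hinv.mul (innerSL ℝ e).hasFDerivAt
    rw [hdir.fderiv_eq, hprod.fderiv]
    simp only [add_apply, smul_apply, innerSL_apply_apply, smul_eq_mul, e,
      EuclideanSpace.inner_single_left, EuclideanSpace.inner_single_right, PiLp.single_apply,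
      if_true, conj_trivial]
    ring
  simp only [lap, hsecond, Finset.sum_sub_distrib, ← Finset.sum_div,
    ← EuclideanSpace.real_norm_sq_eq, Finset.sum_const, Finset.card_univ, Fintype.card_fin,
    nsmul_eq_mul]
  field_simp

theorem pmeDrhs_zero (m : ℝ) (u : Euc n → ℝ → ℝ) (x : Euc n) (t : ℝ) :
    pmeDrhs m (fun _ => 0) u x t = (m - 1) * u x t * lapx u x t + ‖gradx u x t‖ ^ 2 := by
  simp [pmeDrhs, lap]

theorem pressure_rhs_le_of_speed {m d A ω R B₀ h r : ℝ} (hm : 1 ≤ m) (hd : 1 ≤ d) (hA : 0 < A)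
    (hR : 0 < R) (hr : R / 2 < r) (hh₀ : 0 ≤ h) (hh : h ≤ A * (R - B₀))
    (hspeed : ω / A > 1 + 2 * (m - 1) * (d - 1) * (R - B₀) / R) :
    (m - 1) * h * (A * (d - 1) / r) + A ^ 2 ≤ A * ω := by
  have hK : 0 ≤ (m - 1) * (d - 1) := mul_nonneg (by linarith) (by linarith)
  have hr₀ : 0 < r := by linarith
  have hr' : 1 / r ≤ 2 / R := by
    rw [div_le_div_iff₀ hr₀ hR]; linarith
  have hbound : (m - 1) * h * (A * (d - 1) / r) ≤ A * ω - A ^ 2 :=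
    calc (m - 1) * h * (A * (d - 1) / r) = A * ((m - 1) * (d - 1)) * h * (1 / r) := by ring
      _ ≤ A * ((m - 1) * (d - 1)) * (A * (R - B₀)) * (2 / R) := by
        gcongr
        exact mul_nonneg (mul_nonneg hA.le hK) (hh₀.trans hh)
      _ = A ^ 2 * (2 * (m - 1) * (d - 1) * (R - B₀) / R) := by ring
      _ ≤ A ^ 2 * (ω / A - 1) := by gcongr; linarith
      _ = A * ω - A ^ 2 := by field_simp
  linarith

def travelingWave (A ω B₀ : ℝ) : Euc n → ℝ → ℝ := fun x t => A * max (‖x‖ + ω * t - B₀) 0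

section TravelingWave

variable {A ω B₀ : ℝ}

theorem travelingWave_nonneg (hA : 0 ≤ A) (x : Euc n) (t : ℝ) : 0 ≤ travelingWave A ω B₀ x t :=
  mul_nonneg hA (le_max_right _ _)

theorem continuous_travelingWave :
    Continuous fun p : Euc n × ℝ => travelingWave A ω B₀ p.1 p.2 := by
  unfold travelingWave; fun_prop

theorem mem_posSet_travelingWave (hA : 0 < A) {q : Euc n × ℝ} :
    q ∈ PosSet (travelingWave A ω B₀) ↔ B₀ < ‖q.1‖ + ω * q.2 := by
  simp [PosSet, travelingWave, mul_pos_iff_of_pos_left hA]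

theorem posSet_travelingWave (hA : 0 < A) :
    PosSet (travelingWave (n := n) A ω B₀) = {q | B₀ < ‖q.1‖ + ω * q.2} :=
  Set.ext fun _ => mem_posSet_travelingWave hA

theorem frontier_posSet_travelingWave_subset (hA : 0 < A) :
    frontier (PosSet (travelingWave (n := n) A ω B₀)) ⊆ {q | ‖q.1‖ + ω * q.2 = B₀} := by
  have hcont : Continuous fun q : Euc n × ℝ => ‖q.1‖ + ω * q.2 := by fun_prop
  rw [posSet_travelingWave hA, (isOpen_lt continuous_const hcont).frontier_eq]
  rintro q ⟨hq, hqi⟩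
  exact le_antisymm (not_lt.1 hqi) (closure_lt_subset_le continuous_const hcont hq)

theorem travelingWave_eventuallyEq {x : Euc n} {t : ℝ} (h : B₀ < ‖x‖ + ω * t) :
    (fun y => travelingWave A ω B₀ y t) =ᶠ[𝓝 x] fun y => A * ‖y‖ + A * (ω * t - B₀) := by
  have hcont : Continuous fun y : Euc n => ‖y‖ + ω * t := by fun_prop
  filter_upwards [(hcont.tendsto x).eventually_const_lt h] with y (hy : B₀ < ‖y‖ + ω * t)
  simp only [travelingWave, max_eq_left (sub_nonneg.2 hy.le)]
  ring

theorem hasDerivAt_travelingWave {x : Euc n} {t : ℝ} (h : B₀ < ‖x‖ + ω * t) :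
    HasDerivAt (fun s => travelingWave A ω B₀ x s) (A * ω) t := by
  have hlin : HasDerivAt (fun s => A * (‖x‖ + ω * s - B₀)) (A * ω) t := by
    simpa using (((hasDerivAt_id t).const_mul ω).const_add ‖x‖).sub_const B₀ |>.const_mul A
  refine hlin.congr_of_eventuallyEq ?_
  have hcont : Continuous fun s => ‖x‖ + ω * s := by fun_prop
  filter_upwards [(hcont.tendsto t).eventually_const_lt h] with s (hs : B₀ < ‖x‖ + ω * s)
  simp only [travelingWave, max_eq_left (sub_nonneg.2 hs.le)]

theorem dt_travelingWave {x : Euc n} {t : ℝ} (h : B₀ < ‖x‖ + ω * t) :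
    dt (travelingWave A ω B₀) x t = A * ω :=
  (hasDerivAt_travelingWave h).deriv

theorem gradx_travelingWave {x : Euc n} {t : ℝ} (h : B₀ < ‖x‖ + ω * t) (hx : x ≠ 0) :
    gradx (travelingWave A ω B₀) x t = (A / ‖x‖) • x :=
  ((hasGradientAt_const_mul_norm_add A _ hx).congr_of_eventuallyEq
    (travelingWave_eventuallyEq h)).gradient

theorem lapx_travelingWave {x : Euc n} {t : ℝ} (h : B₀ < ‖x‖ + ω * t) (hx : x ≠ 0) :
    lapx (travelingWave A ω B₀) x t = A * (n - 1) / ‖x‖ := by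
  rw [lapx, lap_congr (travelingWave_eventuallyEq h), lap_const_mul_add_const, lap_norm hx]
  ring

theorem contDiffAt_travelingWave {x : Euc n} {t : ℝ} (h : B₀ < ‖x‖ + ω * t) (hx : x ≠ 0) :
    ContDiffAt ℝ 2 (fun y => travelingWave A ω B₀ y t) x :=
  ((contDiffAt_const.mul (contDiffAt_norm ℝ hx)).add contDiffAt_const).congr_of_eventuallyEq
    (travelingWave_eventuallyEq h)

theorem c21On_travelingWave {T : Set (Euc n × ℝ)}
    (hT : T ⊆ {q | B₀ < ‖q.1‖ + ω * q.2 ∧ q.1 ≠ 0}) : C21On (travelingWave A ω B₀) T := by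
  have hcont : Continuous fun q : Euc n × ℝ => ‖q.1‖ + ω * q.2 := by fun_prop
  have hU : IsOpen {q : Euc n × ℝ | B₀ < ‖q.1‖ + ω * q.2 ∧ q.1 ≠ 0} :=
    (isOpen_lt continuous_const hcont).inter (isOpen_ne_fun continuous_fst continuous_const)
  refine ⟨continuous_travelingWave.continuousOn, fun p hp => ?_⟩
  obtain ⟨hpos, hne⟩ := hT hp
  have hev : ∀ᶠ q in 𝓝 p, B₀ < ‖q.1‖ + ω * q.2 ∧ q.1 ≠ 0 := hU.mem_nhds (hT hp)
  have hr : ‖p.1‖ ≠ 0 := norm_ne_zero_iff.2 hne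
  have hgrad : ContinuousAt (fun q : Euc n × ℝ => (A / ‖q.1‖) • q.1) p := by
    fun_prop (disch := exact hr)
  have hlap : ContinuousAt (fun q : Euc n × ℝ => A * (n - 1) / ‖q.1‖) p := by
    fun_prop (disch := exact hr)
  refine ⟨contDiffAt_travelingWave hpos hne, (hasDerivAt_travelingWave hpos).differentiableAt,
    ?_, ?_, ?_⟩
  · exact (continuousAt_const.congr <| hev.mono fun q hq =>
      (dt_travelingWave hq.1).symm).continuousWithinAt
  · exact (hgrad.congr <| hev.mono fun q hq =>
      (gradx_travelingWave hq.1 hq.2).symm).continuousWithinAt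
  · exact (hlap.congr <| hev.mono fun q hq =>
      (lapx_travelingWave hq.1 hq.2).symm).continuousWithinAt

theorem travelingWave_freeBoundary_limits (hA : 0 < A) {p : Euc n × ℝ} (hp : p.1 ≠ 0) :
    ∃ G : Euc n,
      Tendsto (fun q : Euc n × ℝ => gradx (travelingWave A ω B₀) q.1 q.2)
        (𝓝[PosSet (travelingWave A ω B₀)] p) (𝓝 G) ∧
      Tendsto (fun q : Euc n × ℝ => dt (travelingWave A ω B₀) q.1 q.2)
        (𝓝[PosSet (travelingWave A ω B₀)] p) (𝓝 (A * ω)) ∧ ‖G‖ = A := by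
  have hgrad : ContinuousAt (fun q : Euc n × ℝ => (A / ‖q.1‖) • q.1) p := by
    fun_prop (disch := exact norm_ne_zero_iff.2 hp)
  refine ⟨_, (hgrad.tendsto.mono_left nhdsWithin_le_nhds).congr' ?_,
    tendsto_const_nhds.congr' ?_, norm_div_norm_smul hA.le hp⟩
  · filter_upwards [self_mem_nhdsWithin,
      nhdsWithin_le_nhds ((isOpen_ne_fun continuous_fst continuous_const).mem_nhds hp)]
      with q hq (hq0 : q.1 ≠ 0)
    exact (gradx_travelingWave ((mem_posSet_travelingWave hA).1 hq) hq0).symm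
  · exact eventually_nhdsWithin_of_forall fun _ hq =>
      (dt_travelingWave ((mem_posSet_travelingWave hA).1 hq)).symm

theorem travelingWave_pde_le {m R : ℝ} (hn : 1 ≤ n) (hm : 1 < m) (hA : 0 < A)
    (hω : 0 ≤ ω) (hR : 0 < R) (hB₀ : R / 2 < B₀)
    (hspeed : ω / A > 1 + 2 * (m - 1) * ((n : ℝ) - 1) * (R - B₀) / R)
    {x : Euc n} {t : ℝ} (hxR : ‖x‖ ≤ R) (ht : t ≤ 0) (hpos : B₀ < ‖x‖ + ω * t) :
    (m - 1) * travelingWave A ω B₀ x t * lapx (travelingWave A ω B₀) x t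
      + ‖gradx (travelingWave A ω B₀) x t‖ ^ 2 ≤ dt (travelingWave A ω B₀) x t := by
  have hx : x ≠ 0 := norm_pos_iff.1 (by nlinarith)
  rw [gradx_travelingWave hpos hx, norm_div_norm_smul hA.le hx, lapx_travelingWave hpos hx,
    dt_travelingWave hpos]
  refine pressure_rhs_le_of_speed hm.le (by exact_mod_cast hn) hA hR (by nlinarith)
    (travelingWave_nonneg hA.le x t) ?_ hspeed
  exact mul_le_mul_of_nonneg_left (max_le (by nlinarith) (by nlinarith)) hA.le

end TravelingWave

/-- The spherical traveling wave `H(x,t) = A(|x| + ωt − B₀)₊` is a classical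
free-boundary supersolution of (PME) in `{|x| ≤ R} × [−(R−B₀)/ω, 0]`. -/
theorem traveling_wave_is_classical_supersolution
    (n : ℕ) (hn : 1 ≤ n) (m : ℝ) (hm : 1 < m)
    (A ω R B₀ : ℝ) (hA : 0 < A) (hω : 0 < ω) (hR : 0 < R)
    (hB₀ : R / 2 < B₀ ∧ B₀ < R)
    (hspeed : ω / A > 1 + 2 * (m - 1) * ((n : ℝ) - 1) * (R - B₀) / R)
    (H : Euc n → ℝ → ℝ)
    (hH : ∀ (x : Euc n) (t : ℝ), H x t = A * max (‖x‖ + ω * t - B₀) 0)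
    (S : Set (Euc n × ℝ))
    (hS : S = {p : Euc n × ℝ | ‖p.1‖ ≤ R ∧ p.2 ∈ Icc (-(R - B₀) / ω) 0}) :
    ClassicalFBSuper m (fun _ => (0 : ℝ)) H S ∧
    (∀ p ∈ S, 0 < H p.1 p.2 →
      (m - 1) * H p.1 p.2 * lapx H p.1 p.2 + ‖gradx H p.1 p.2‖ ^ 2 ≤ dt H p.1 p.2) ∧
    (∀ p ∈ S, ‖p.1‖ = B₀ - ω * p.2 →
      ∃ G : Euc n,
        Tendsto (fun q : Euc n × ℝ => gradx H q.1 q.2) (𝓝[PosSet H] p) (𝓝 G) ∧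
        Tendsto (fun q : Euc n × ℝ => dt H q.1 q.2) (𝓝[PosSet H] p) (𝓝 (A * ω)) ∧
        ‖G‖ = A ∧ 0 < A ∧ A * ω ≥ A ^ 2) := by
  obtain rfl : H = travelingWave A ω B₀ := funext fun x => funext (hH x)
  have hS' : ∀ p ∈ S, ‖p.1‖ ≤ R ∧ p.2 ≤ 0 := by
    subst hS
    exact fun p hp => ⟨hp.1, hp.2.2⟩
  have hne : ∀ p ∈ S, B₀ ≤ ‖p.1‖ + ω * p.2 → p.1 ≠ 0 := by
    intro p hp hB h0
    rw [h0, norm_zero] at hB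
    nlinarith [(hS' p hp).2]
  have hpde (p) (hp : p ∈ S) (hpos : 0 < travelingWave A ω B₀ p.1 p.2) :=
    travelingWave_pde_le hn hm hA hω.le hR hB₀.1 hspeed (hS' p hp).1 (hS' p hp).2
      ((mem_posSet_travelingWave hA).1 hpos)
  -- `A² ≤ Aω` is the pressure estimate at a point where `H` vanishes.
  have hωA : A ^ 2 ≤ A * ω := by
    simpa using pressure_rhs_le_of_speed (h := 0) (r := R) hm.le (by exact_mod_cast hn) hA hR
      (by linarith) le_rfl (by nlinarith) hspeed
  refine ⟨⟨fun p _ => travelingWave_nonneg hA.le p.1 p.2, continuous_travelingWave.continuousOn,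
    c21On_travelingWave fun p hp => ?_, fun p hp => (pmeDrhs_zero ..).trans_le (hpde p hp.1 hp.2),
    ?_⟩, hpde, ?_⟩
  · have hB := (mem_posSet_travelingWave hA).1 hp.2
    exact ⟨hB, hne p hp.1 hB.le⟩
  · rintro p ⟨hp, hpf⟩
    have hB := frontier_posSet_travelingWave_subset hA hpf
    obtain ⟨G, hG, hT, hGA⟩ := travelingWave_freeBoundary_limits hA (hne p hp (le_of_eq hB.symm))
    exact ⟨G, A * ω, hG, hT, hGA ▸ hA, by simpa [hGA] using hωA⟩
  · intro p hp hB
    obtain ⟨G, hG, hT, hGA⟩ := travelingWave_freeBoundary_limits hA (hne p hp (by linarith))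
    exact ⟨G, hG, hT, hGA, hA, hωA⟩
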